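/- arXiv:2603.20793 — 5 statements merged into one kernel-verified Lean document; each statement's English description precedes it below -/
import Mathlib

section
/- With the sl₂ bracket [·,·]₀ on V = K³ and a linear map α₁ with matrix (a_{ij}), the triple (V, [·,·]₀, α₁) is a Hom–Lie algebra (i.e., the Hom–Jacobi identity Σ_cyc [α₁(x),[y,z]₀]₀ = 0 holds for all x,y,z ∈ V) if and only if a₂₂ = a₃₃, a₂₁ = 2a₁₃, and a₃₁ = 2a₁₂. -/
/-!
The Hom–Jacobiator `J(x, y, z) = ∮ [α x, [y, z]₀]₀` is trilinear and alternating, because the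
bracket is skew-symmetric; on the three-dimensional space `K³` it is therefore
`det (x, y, z) • J(x₁, x₂, x₃)`. So the Hom–Jacobi identity holds iff `J(x₁, x₂, x₃) = 0`, and this
vector is `2 • (a₂₂ - a₃₃, 2a₁₃ - a₂₁, a₃₁ - 2a₁₂)`.
-/

/-- The sl₂ bracket on `K³` in the basis `x₁,x₂,x₃` (indices 0,1,2). -/
def br0 {K : Type*} [CommRing K] (u v : Fin 3 → K) : Fin 3 → K :=
  ![u 1 * v 2 - u 2 * v 1,
    2 * (u 0 * v 1 - u 1 * v 0),
    -2 * (u 0 * v 2 - u 2 * v 0)]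

/-- The linear map with matrix `a` in the basis `x₁,x₂,x₃`: `α(v)ᵢ = Σⱼ aᵢⱼ vⱼ`. -/
def matMap {K : Type*} [CommRing K] (a : Fin 3 → Fin 3 → K) (v : Fin 3 → K) :
    Fin 3 → K := fun i => ∑ j, a i j * v j

section HomJacobiator

variable {K : Type*} [CommRing K]

def homJacobiator (a : Fin 3 → Fin 3 → K) (x y z : Fin 3 → K) : Fin 3 → K :=
  br0 (matMap a x) (br0 y z) + br0 (matMap a y) (br0 z x) + br0 (matMap a z) (br0 x y)

theorem homJacobiator_basis (a : Fin 3 → Fin 3 → K) :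
    homJacobiator a ![1, 0, 0] ![0, 1, 0] ![0, 0, 1] =
      (2 : K) • ![a 1 1 - a 2 2, 2 * a 0 2 - a 1 0, a 2 0 - 2 * a 0 1] := by
  ext i
  fin_cases i <;> simp [homJacobiator, br0, matMap, Fin.sum_univ_three] <;> ring

theorem homJacobiator_eq_det_smul (a : Fin 3 → Fin 3 → K) (x y z : Fin 3 → K) :
    homJacobiator a x y z =
      (Matrix.of ![x, y, z]).det • homJacobiator a ![1, 0, 0] ![0, 1, 0] ![0, 0, 1] := by
  rw [homJacobiator_basis]
  ext i
  fin_cases i <;> simp [homJacobiator, br0, matMap, Fin.sum_univ_three, Matrix.det_fin_three] <;>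
    ring

theorem homJacobiator_basis_eq_zero_iff [IsDomain K] [NeZero (2 : K)] (a : Fin 3 → Fin 3 → K) :
    homJacobiator a ![1, 0, 0] ![0, 1, 0] ![0, 0, 1] = 0 ↔
      (a 1 1 = a 2 2 ∧ a 1 0 = 2 * a 0 2 ∧ a 2 0 = 2 * a 0 1) := by
  rw [homJacobiator_basis, smul_eq_zero_iff_right two_ne_zero]
  simp only [Matrix.cons_eq_zero_iff, Matrix.zero_empty, and_true, sub_eq_zero]
  exact and_congr Iff.rfl (and_congr eq_comm Iff.rfl)

end HomJacobiator

theorem stmt2 {K : Type*} [Field K] [CharZero K] (a : Fin 3 → Fin 3 → K) :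
    (∀ x y z : Fin 3 → K,
        br0 (matMap a x) (br0 y z) + br0 (matMap a y) (br0 z x)
          + br0 (matMap a z) (br0 x y) = 0)
    ↔ (a 1 1 = a 2 2 ∧ a 1 0 = 2 * a 0 2 ∧ a 2 0 = 2 * a 0 1) := by
  change (∀ x y z, homJacobiator a x y z = 0) ↔ _
  rw [← homJacobiator_basis_eq_zero_iff]
  refine ⟨fun h => h _ _ _, fun h x y z => ?_⟩
  rw [homJacobiator_eq_det_smul, h, smul_zero]
end

section
/- Let [·,·]₁ be a skew-symmetric bilinear bracket on V = K³ with structure constants satisfying p₂ + q₃ = 0, q₁ + r₂ = 0, p₁ − r₃ = 0. Then for every t ∈ K, the bracket [·,·]_t = [·,·]₀ + t[·,·]₁ satisfies the ordinary Jacobi identity, i.e., (V, [·,·]_t) is a Lie algebra. -/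
set_option maxHeartbeats 1000000

/-- Skew-symmetric bilinear bracket with structure constants `p, q, r`. -/
def br1 {K : Type*} [CommRing K] (p q r : Fin 3 → K) (u v : Fin 3 → K) :
    Fin 3 → K := fun i =>
  (u 0 * v 1 - u 1 * v 0) * p i + (u 0 * v 2 - u 2 * v 0) * q i
    + (u 1 * v 2 - u 2 * v 1) * r i

/-- The deformed bracket `[·,·]_t = [·,·]₀ + t[·,·]₁`. -/
def brt {K : Type*} [CommRing K] (p q r : Fin 3 → K) (t : K) (u v : Fin 3 → K) :
    Fin 3 → K := br0 u v + t • br1 p q r u v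

theorem stmt8 {K : Type*} [Field K] [CharZero K] (p q r : Fin 3 → K)
    (h1 : p 1 + q 2 = 0) (h2 : q 0 + r 1 = 0) (h3 : p 0 - r 2 = 0) :
    ∀ (t : K) (x y z : Fin 3 → K),
      brt p q r t x (brt p q r t y z) + brt p q r t y (brt p q r t z x)
        + brt p q r t z (brt p q r t x y) = 0 := by
  have hq2 : q 2 = -(p 1) := by linear_combination h1
  have hr1 : r 1 = -(q 0) := by linear_combination h2
  have hr2 : r 2 = p 0 := by linear_combination -h3
  intro t x y z
  funext i
  fin_cases i <;>
  · simp only [brt, br0, br1, Pi.add_apply, Pi.smul_apply, smul_eq_mul, Pi.zero_apply,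
      Matrix.cons_val_zero, Matrix.cons_val_one, Matrix.head_cons, Matrix.cons_val_two,
      Matrix.tail_cons, Fin.isValue, Fin.mk_zero, Fin.mk_one, show (⟨2, by norm_num⟩ : Fin 3) = 2 from rfl]
    rw [hq2, hr1, hr2]
    ring
end

section
/- (Makhlouf–Silvestrov conjecture) Let V = sl₂(K) with its standard bracket [·,·]₀, let [·,·]₁ be a skew-symmetric bilinear bracket on V, and let α₁ : V → V be linear. Assume: (i) the pair ([·,·]_t, α_t) with [·,·]_t = [·,·]₀ + t[·,·]₁ and α_t = id + tα₁ satisfies the Hom–Jacobi identity modulo t², i.e., the coefficient of t in Σ_cyc [α_t(x),[y,z]_t]_t vanishes for all x,y,z ∈ V; and (ii) (V, [·,·]₀, α₁) is a Hom–Lie algebra, i.e., Σ_cyc [α₁(x),[y,z]₀]₀ = 0 for all x,y,z. Then [·,·]_t satisfies the ordinary Jacobi identity for every value of t ∈ K, so (V, [·,·]_t) is a Lie algebra. -/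
set_option maxHeartbeats 2000000


/-- The deformed bracket `[·,·]_t = [·,·]₀ + tB` for a bilinear `B`. -/
def brtB {K : Type*} [CommRing K]
    (B : (Fin 3 → K) →ₗ[K] (Fin 3 → K) →ₗ[K] (Fin 3 → K)) (t : K)
    (u v : Fin 3 → K) : Fin 3 → K := br0 u v + t • B u v

/-- The deformed twisting map `α_t = id + tα₁`. -/
def alphatL {K : Type*} [CommRing K] (α : (Fin 3 → K) →ₗ[K] (Fin 3 → K))
    (t : K) (v : Fin 3 → K) : Fin 3 → K := v + t • α v

/-- **Makhlouf–Silvestrov conjecture.**  If `([·,·]_t, α_t)` with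
`[·,·]_t = [·,·]₀ + t[·,·]₁` and `α_t = id + tα₁` satisfies the Hom–Jacobi
identity to first order in `t` (the coefficient of `t` in the cyclic sum
vanishes, i.e. the cyclic sum is of the form `c₀ + t²c₂ + t³c₃`), and if
`(sl₂(K), [·,·]₀, α₁)` is a Hom–Lie algebra, then `[·,·]_t` satisfies the
ordinary Jacobi identity for every `t`. -/
theorem stmt9 {K : Type*} [Field K] [CharZero K]
    (B : (Fin 3 → K) →ₗ[K] (Fin 3 → K) →ₗ[K] (Fin 3 → K))
    (hskew : ∀ x y : Fin 3 → K, B x y = -B y x)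
    (α : (Fin 3 → K) →ₗ[K] (Fin 3 → K))
    (hdef : ∀ x y z : Fin 3 → K, ∃ c0 c2 c3 : Fin 3 → K, ∀ t : K,
      brtB B t (alphatL α t x) (brtB B t y z)
        + brtB B t (alphatL α t y) (brtB B t z x)
        + brtB B t (alphatL α t z) (brtB B t x y)
      = c0 + t ^ 2 • c2 + t ^ 3 • c3)
    (hhom : ∀ x y z : Fin 3 → K,
      br0 (α x) (br0 y z) + br0 (α y) (br0 z x) + br0 (α z) (br0 x y) = 0) :
    ∀ (t : K) (x y z : Fin 3 → K),
      brtB B t x (brtB B t y z) + brtB B t y (brtB B t z x)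
        + brtB B t z (brtB B t x y) = 0 := by
  -- B applied to equal arguments vanishes
  have hself : ∀ w : Fin 3 → K, B w w = 0 := by
    intro w
    have h2 : (2 : K) • B w w = 0 := by
      rw [two_smul]
      nth_rewrite 1 [hskew w w]
      rw [neg_add_cancel]
    exact (smul_eq_zero.mp h2).resolve_left (by norm_num)
  -- decomposition of a vector in the standard basis
  have hdec : ∀ u : Fin 3 → K,
      u = u 0 • ![(1:K),0,0] + u 1 • ![(0:K),1,0] + u 2 • ![(0:K),0,1] := by
    intro u
    funext k
    fin_cases k <;> simp
  -- express B through its values on the basis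
  obtain ⟨p, q, r, hB⟩ : ∃ p q r : Fin 3 → K, ∀ u v : Fin 3 → K,
      B u v = (u 0 * v 1 - u 1 * v 0) • p + (u 0 * v 2 - u 2 * v 0) • q
        + (u 1 * v 2 - u 2 * v 1) • r := by
    refine ⟨B ![1,0,0] ![0,1,0], B ![1,0,0] ![0,0,1], B ![0,1,0] ![0,0,1], fun u v => ?_⟩
    conv_lhs => rw [hdec u, hdec v]
    simp only [map_add, map_smul, LinearMap.add_apply, LinearMap.smul_apply, hself,
      smul_zero, add_zero, zero_add]
    rw [hskew ![0,1,0] ![1,0,0], hskew ![0,0,1] ![1,0,0], hskew ![0,0,1] ![0,1,0]]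
    module
  -- the first-order (cocycle) relations extracted from `hdef` and `hhom`
  obtain ⟨c0, c2, c3, hJ⟩ := hdef ![(1:K),0,0] ![(0:K),1,0] ![(0:K),0,1]
  have h1 := hJ 1
  have hm1 := hJ (-1)
  have h2 := hJ 2
  have hm2 := hJ (-2)
  have hh := hhom ![(1:K),0,0] ![(0:K),1,0] ![(0:K),0,1]
  have h10 := congrFun h1 0
  have h11 := congrFun h1 1
  have h12 := congrFun h1 2
  have hm10 := congrFun hm1 0
  have hm11 := congrFun hm1 1
  have hm12 := congrFun hm1 2
  have h20 := congrFun h2 0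
  have h21 := congrFun h2 1
  have h22 := congrFun h2 2
  have hm20 := congrFun hm2 0
  have hm21 := congrFun hm2 1
  have hm22 := congrFun hm2 2
  have hh0 := congrFun hh 0
  have hh1 := congrFun hh 1
  have hh2 := congrFun hh 2
  simp [brtB, alphatL, br0, hB, Matrix.cons_val_two, Matrix.cons_val_succ, Matrix.tail_cons, Matrix.vecHead,
    Matrix.vecTail, Function.comp, Pi.smul_apply, Pi.add_apply, smul_eq_mul]
    at h10 h11 h12 hm10 hm11 hm12 h20 h21 h22 hm20 hm21 hm22 hh0 hh1 hh2
  have hC0 : p 1 + q 2 = 0 := by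
    linear_combination (-(2:K)/3) * h10 + ((2:K)/3) * hm10 + ((1:K)/12) * h20
      + (-(1:K)/12) * hm20 + hh0
  have hC1 : q 0 + r 1 = 0 := by
    linear_combination ((1:K)/3) * h11 + (-(1:K)/3) * hm11 + (-(1:K)/24) * h21
      + ((1:K)/24) * hm21 - ((1:K)/2) * hh1
  have hC2 : p 0 - r 2 = 0 := by
    linear_combination ((1:K)/3) * h12 + (-(1:K)/3) * hm12 + (-(1:K)/24) * h22
      + ((1:K)/24) * hm22 - ((1:K)/2) * hh2
  -- the main computation
  intro t x y z
  funext k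
  fin_cases k
  · simp only [brtB, br0, hB, Pi.add_apply, Pi.smul_apply, Pi.zero_apply, smul_eq_mul,
      Matrix.cons_val_zero, Matrix.cons_val_one, Matrix.head_cons, Matrix.cons_val_two,
      Matrix.tail_cons, Matrix.vecHead, Matrix.vecTail, Function.comp]
    simp only [Fin.zero_eta, Fin.mk_one, Fin.reduceFinMk, Matrix.cons_val_zero,
      Matrix.cons_val_one, Matrix.head_cons, Matrix.cons_val_two, Matrix.cons_val_succ, Matrix.tail_cons,
      Pi.zero_apply, Matrix.vecHead, Matrix.vecTail, Function.comp]
    linear_combination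
        ((x 0*(y 1*z 2 - y 2*z 1) - x 1*(y 0*z 2 - y 2*z 0) + x 2*(y 0*z 1 - y 1*z 0))
          * (-t - t^2 * r 0)) * hC0
        + ((x 0*(y 1*z 2 - y 2*z 1) - x 1*(y 0*z 2 - y 2*z 0) + x 2*(y 0*z 1 - y 1*z 0))
          * (t^2 * p 0)) * hC1
        + ((x 0*(y 1*z 2 - y 2*z 1) - x 1*(y 0*z 2 - y 2*z 0) + x 2*(y 0*z 1 - y 1*z 0))
          * (-t^2 * q 0)) * hC2
  · simp only [brtB, br0, hB, Pi.add_apply, Pi.smul_apply, Pi.zero_apply, smul_eq_mul,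
      Matrix.cons_val_zero, Matrix.cons_val_one, Matrix.head_cons, Matrix.cons_val_two,
      Matrix.tail_cons, Matrix.vecHead, Matrix.vecTail, Function.comp]
    simp only [Fin.zero_eta, Fin.mk_one, Fin.reduceFinMk, Matrix.cons_val_zero,
      Matrix.cons_val_one, Matrix.head_cons, Matrix.cons_val_two, Matrix.cons_val_succ, Matrix.tail_cons,
      Pi.zero_apply, Matrix.vecHead, Matrix.vecTail, Function.comp]
    linear_combination
        ((x 0*(y 1*z 2 - y 2*z 1) - x 1*(y 0*z 2 - y 2*z 0) + x 2*(y 0*z 1 - y 1*z 0))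
          * (-t^2 * r 1)) * hC0
        + ((x 0*(y 1*z 2 - y 2*z 1) - x 1*(y 0*z 2 - y 2*z 0) + x 2*(y 0*z 1 - y 1*z 0))
          * (2*t + t^2 * p 1)) * hC1
        + ((x 0*(y 1*z 2 - y 2*z 1) - x 1*(y 0*z 2 - y 2*z 0) + x 2*(y 0*z 1 - y 1*z 0))
          * (-t^2 * q 1)) * hC2
  · simp only [brtB, br0, hB, Pi.add_apply, Pi.smul_apply, Pi.zero_apply, smul_eq_mul,
      Matrix.cons_val_zero, Matrix.cons_val_one, Matrix.head_cons, Matrix.cons_val_two,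
      Matrix.tail_cons, Matrix.vecHead, Matrix.vecTail, Function.comp]
    simp only [Fin.zero_eta, Fin.mk_one, Fin.reduceFinMk, Matrix.cons_val_zero,
      Matrix.cons_val_one, Matrix.head_cons, Matrix.cons_val_two, Matrix.cons_val_succ, Matrix.tail_cons,
      Pi.zero_apply, Matrix.vecHead, Matrix.vecTail, Function.comp]
    linear_combination
        ((x 0*(y 1*z 2 - y 2*z 1) - x 1*(y 0*z 2 - y 2*z 0) + x 2*(y 0*z 1 - y 1*z 0))
          * (-t^2 * r 2)) * hC0
        + ((x 0*(y 1*z 2 - y 2*z 1) - x 1*(y 0*z 2 - y 2*z 0) + x 2*(y 0*z 1 - y 1*z 0))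
          * (t^2 * p 2)) * hC1
        + ((x 0*(y 1*z 2 - y 2*z 1) - x 1*(y 0*z 2 - y 2*z 0) + x 2*(y 0*z 1 - y 1*z 0))
          * (2*t - t^2 * q 2)) * hC2
end

section
/- Let (V, {·,·}) be a Lie algebra over a commutative ring R and let α : V → V be a Lie algebra endomorphism ({α(x),α(y)} = α({x,y})). Define [x,y] := α({x,y}). Then (V, [·,·], α) is a Hom–Lie algebra: [·,·] is bilinear and skew-symmetric, and [α(x),[y,z]] + [α(y),[z,x]] + [α(z),[x,y]] = 0 for all x,y,z ∈ V. -/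
/-- **Yau twisting.**  If `(V, ⁅·,·⁆)` is a Lie algebra over a commutative
ring `R` and `α` is a Lie algebra endomorphism, then `[x,y] := α ⁅x,y⁆`
makes `(V, [·,·], α)` a Hom–Lie algebra: `[·,·]` is bilinear and
skew-symmetric and satisfies the Hom–Jacobi identity. -/
theorem stmt10 {R V : Type*} [CommRing R] [LieRing V] [LieAlgebra R V]
    (α : V →ₗ[R] V) (hα : ∀ x y : V, α ⁅x, y⁆ = ⁅α x, α y⁆) :
    (∀ x x' y : V, α ⁅x + x', y⁆ = α ⁅x, y⁆ + α ⁅x', y⁆)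
    ∧ (∀ (c : R) (x y : V), α ⁅c • x, y⁆ = c • α ⁅x, y⁆)
    ∧ (∀ x y y' : V, α ⁅x, y + y'⁆ = α ⁅x, y⁆ + α ⁅x, y'⁆)
    ∧ (∀ (c : R) (x y : V), α ⁅x, c • y⁆ = c • α ⁅x, y⁆)
    ∧ (∀ x y : V, α ⁅x, y⁆ = -α ⁅y, x⁆)
    ∧ (∀ x y z : V,
        α ⁅α x, α ⁅y, z⁆⁆ + α ⁅α y, α ⁅z, x⁆⁆ + α ⁅α z, α ⁅x, y⁆⁆ = 0) := by
  refine ⟨fun x x' y => by simp [add_lie], fun c x y => by simp [smul_lie],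
    fun x y y' => by simp [lie_add], fun c x y => by simp [lie_smul],
    fun x y => by rw [← lie_skew y x, map_neg, neg_neg], fun x y z => ?_⟩
  rw [← hα, ← hα, ← hα, ← map_add, ← map_add, ← map_add, ← map_add]
  have := lie_jacobi x y z
  rw [this, map_zero, map_zero]
end

section
/- Let (V, [·,·], α) be a Hom–Lie algebra over a commutative ring R in which α is invertible and α⁻¹ is also an algebra map for [·,·] in the sense that α([x,y]) = [α(x),α(y)] for all x,y. Define {x,y} := α⁻¹([x,y]). Then (V, {·,·}) is a Lie algebra, i.e., {·,·} is skew-symmetric and satisfies the Jacobi identity. -/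
/-- **Untwisting.**  If `(V, B, α)` is a Hom–Lie algebra over a commutative
ring `R` with `α` invertible and multiplicative for the bracket, then
`{x,y} := α⁻¹(B x y)` is a Lie bracket: skew-symmetric and Jacobi. -/
theorem stmt11 {R V : Type*} [CommRing R] [AddCommGroup V] [Module R V]
    (B : V →ₗ[R] V →ₗ[R] V) (hskew : ∀ x y : V, B x y = -B y x)
    (α : V ≃ₗ[R] V) (hmul : ∀ x y : V, α (B x y) = B (α x) (α y))
    (hjac : ∀ x y z : V,
      B (α x) (B y z) + B (α y) (B z x) + B (α z) (B x y) = 0) :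
    (∀ x y : V, α.symm (B x y) = -α.symm (B y x))
    ∧ (∀ x y z : V,
        α.symm (B x (α.symm (B y z))) + α.symm (B y (α.symm (B z x)))
          + α.symm (B z (α.symm (B x y))) = 0) := by
  have hsymm : ∀ x y : V, α.symm (B x y) = B (α.symm x) (α.symm y) := by
    intro x y
    apply α.injective
    rw [α.apply_symm_apply, hmul, α.apply_symm_apply, α.apply_symm_apply]
  constructor
  · intro x y
    rw [hskew x y, map_neg]
  · intro x y z
    have key := hjac (α.symm (α.symm x)) (α.symm (α.symm y)) (α.symm (α.symm z))
    simp only [α.apply_symm_apply] at key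
    calc α.symm (B x (α.symm (B y z))) + α.symm (B y (α.symm (B z x)))
          + α.symm (B z (α.symm (B x y)))
        = α.symm (B x (B (α.symm y) (α.symm z))) + α.symm (B y (B (α.symm z) (α.symm x)))
          + α.symm (B z (B (α.symm x) (α.symm y))) := by rw [hsymm y z, hsymm z x, hsymm x y]
      _ = B (α.symm x) (B (α.symm (α.symm y)) (α.symm (α.symm z)))
          + B (α.symm y) (B (α.symm (α.symm z)) (α.symm (α.symm x)))
          + B (α.symm z) (B (α.symm (α.symm x)) (α.symm (α.symm y))) := by
            rw [hsymm, hsymm, hsymm, hsymm, hsymm, hsymm]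
      _ = 0 := key
end
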